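/- For every α ∈ (0,1) there exists a constant C_α such that for every real λ ≥ 2, ∫_{{r ≥ 0 : |r − λ| ≥ 1}} (2+r²)^{α/2} |r² − λ²|^{−1} dr ≤ C_α λ^{α−1} log λ. (This is the calculus estimate used in the reduction lemma of Section 4 to bound the contribution to Q_λ from frequencies ξ with ||ξ| − |λ|| ≥ 1.) -/

import Mathlib

/-!
For `0 ≤ r ≤ 2λ` one has `|r² − λ²| = |r − λ| (r + λ) ≥ λ |r − λ|` and `(2 + r²)^{α/2} ≲ λ^α`,
so this part of the integral is `≲ λ^{α−1} ∫_{1 ≤ |r−λ| ≤ λ} |r − λ|⁻¹ dr = 2 λ^{α−1} log λ`.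
For `r > 2λ` the integrand is `≲ r^{α−2}`, whose tail integral is `≲ λ^{α−1} / (1 − α)`,
and this is absorbed since `log λ ≥ log 2 > 1/2`.
-/

open MeasureTheory Set Real

noncomputable section

def offbandIntegrand (α lam r : ℝ) : ℝ := (2 + r ^ 2) ^ (α / 2) * |r ^ 2 - lam ^ 2|⁻¹

lemma rpow_half_two_add_sq_le {α c x r : ℝ} (hα0 : 0 ≤ α) (hα1 : α ≤ 1) (hc : 1 ≤ c)
    (hx : 0 ≤ x) (h : 2 + r ^ 2 ≤ (c * x) ^ 2) : (2 + r ^ 2) ^ (α / 2) ≤ c * x ^ α := by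
  calc (2 + r ^ 2) ^ (α / 2) ≤ ((c * x) ^ (2 : ℝ)) ^ (α / 2) := by
        rw [rpow_two]; gcongr
    _ = c ^ α * x ^ α := by
        rw [← rpow_mul (by positivity), mul_div_cancel₀ α two_ne_zero,
          mul_rpow (by positivity) hx]
    _ ≤ c * x ^ α := by
        gcongr
        simpa using rpow_le_rpow_of_exponent_le hc hα1

lemma integrableOn_inv_abs_sub_Icc {a b c : ℝ} (hc : c ∉ Icc a b) :
    IntegrableOn (fun r => |r - c|⁻¹) (Icc a b) :=
  ContinuousOn.integrableOn_Icc <| (continuous_id.sub continuous_const).abs.continuousOn.inv₀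
    fun _ hr => abs_ne_zero.2 <| sub_ne_zero.2 <| ne_of_mem_of_not_mem hr hc

lemma integral_Icc_inv_abs_sub_of_lt {a b c : ℝ} (hab : a ≤ b) (hbc : b < c) :
    ∫ r in Icc a b, |r - c|⁻¹ = log ((c - a) / (c - b)) := by
  rw [integral_Icc_eq_integral_Ioc, ← intervalIntegral.integral_of_le hab,
    intervalIntegral.integral_congr (g := fun r => (c - r)⁻¹) fun r hr => by
      rw [uIcc_of_le hab] at hr
      simp only [abs_of_neg (by linarith [hr.2] : r - c < 0), neg_sub],
    intervalIntegral.integral_comp_sub_left (fun x => x⁻¹), integral_inv]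
  rw [uIcc_of_le (by linarith)]
  exact fun h => by linarith [h.1]

lemma integral_Icc_inv_abs_sub_of_gt {a b c : ℝ} (hab : a ≤ b) (hca : c < a) :
    ∫ r in Icc a b, |r - c|⁻¹ = log ((b - c) / (a - c)) := by
  rw [integral_Icc_eq_integral_Ioc, ← intervalIntegral.integral_of_le hab,
    intervalIntegral.integral_congr (g := fun r => (r - c)⁻¹) fun r hr => by
      rw [uIcc_of_le hab] at hr
      simp only [abs_of_pos (by linarith [hr.1] : 0 < r - c)],
    intervalIntegral.integral_comp_sub_right (fun x => x⁻¹), integral_inv]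
  rw [uIcc_of_le (by linarith)]
  exact fun h => by linarith [h.1]

def offbandNear (lam : ℝ) : Set ℝ := Icc 0 (lam - 1) ∪ Icc (lam + 1) (2 * lam)

lemma measurableSet_offbandNear (lam : ℝ) : MeasurableSet (offbandNear lam) :=
  measurableSet_Icc.union measurableSet_Icc

lemma mem_Icc_of_mem_offbandNear {lam r : ℝ} (hr : r ∈ offbandNear lam) : r ∈ Icc 0 (2 * lam) :=
  hr.elim (fun h => ⟨h.1, by linarith [h.1, h.2]⟩) fun h => ⟨by linarith [h.1, h.2], h.2⟩

lemma disjoint_offbandNear_Ioi (lam : ℝ) : Disjoint (offbandNear lam) (Ioi (2 * lam)) :=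
  disjoint_left.2 fun _ hr hr' => not_lt.2 (mem_Icc_of_mem_offbandNear hr).2 hr'

lemma setOf_nonneg_one_le_abs_sub_eq {lam : ℝ} (hlam : 1 ≤ lam) :
    {r : ℝ | 0 ≤ r ∧ 1 ≤ |r - lam|} = offbandNear lam ∪ Ioi (2 * lam) := by
  ext r
  simp only [offbandNear, mem_ofPred_eq, mem_union, mem_Icc, mem_Ioi, le_abs']
  constructor
  · rintro ⟨hr0, hr | hr⟩
    · exact Or.inl (Or.inl ⟨hr0, by linarith⟩)
    · by_cases h : r ≤ 2 * lam
      exacts [Or.inl (Or.inr ⟨by linarith, h⟩), Or.inr (not_le.1 h)]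
  · rintro ((hr | hr) | hr)
    exacts [⟨hr.1, Or.inl (by linarith)⟩, ⟨by linarith, Or.inr (by linarith)⟩,
      ⟨by linarith, Or.inr (by linarith)⟩]

lemma integrableOn_inv_abs_sub_offbandNear (lam : ℝ) :
    IntegrableOn (fun r => |r - lam|⁻¹) (offbandNear lam) :=
  (integrableOn_inv_abs_sub_Icc fun h => by linarith [h.2]).union
    (integrableOn_inv_abs_sub_Icc fun h => by linarith [h.1])

lemma integral_inv_abs_sub_offbandNear {lam : ℝ} (hlam : 1 ≤ lam) :
    ∫ r in offbandNear lam, |r - lam|⁻¹ = 2 * log lam := by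
  have hdisj : Disjoint (Icc 0 (lam - 1)) (Icc (lam + 1) (2 * lam)) :=
    disjoint_left.2 fun _ h₁ h₂ => by linarith [h₁.2, h₂.1]
  rw [offbandNear, setIntegral_union hdisj measurableSet_Icc
      (integrableOn_inv_abs_sub_Icc fun h => by linarith [h.2])
      (integrableOn_inv_abs_sub_Icc fun h => by linarith [h.1]),
    integral_Icc_inv_abs_sub_of_lt (by linarith) (by linarith),
    integral_Icc_inv_abs_sub_of_gt (by linarith) (by linarith)]
  ring_nf

namespace offbandIntegrand

variable {α lam : ℝ}

lemma nonneg (r : ℝ) : 0 ≤ offbandIntegrand α lam r := by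
  unfold offbandIntegrand; positivity

lemma measurable : Measurable (offbandIntegrand α lam) :=
  (((continuous_const.add (continuous_pow 2)).rpow_const fun r =>
      Or.inl (by positivity : (2 : ℝ) + r ^ 2 ≠ 0)).measurable).mul
    ((continuous_pow 2).sub continuous_const).abs.measurable.inv

lemma integrableOn_of_le {s : Set ℝ} {g : ℝ → ℝ} (hs : MeasurableSet s)
    (hg : IntegrableOn g s) (h : ∀ r ∈ s, offbandIntegrand α lam r ≤ g r) :
    IntegrableOn (offbandIntegrand α lam) s := by
  refine hg.mono' measurable.aestronglyMeasurable ?_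
  filter_upwards [ae_restrict_mem hs] with r hr
  rw [norm_of_nonneg (nonneg r)]
  exact h r hr

lemma le_near (hα0 : 0 ≤ α) (hα1 : α ≤ 1) (hlam : 1 ≤ lam) {r : ℝ} (hr0 : 0 ≤ r)
    (hr : r ≤ 2 * lam) : offbandIntegrand α lam r ≤ 3 * lam ^ (α - 1) * |r - lam|⁻¹ := by
  -- no need to exclude `r = lam`: there both sides vanish, as `0⁻¹ = 0`
  have hlam0 : 0 < lam := by linarith
  have hweight : (2 + r ^ 2) ^ (α / 2) ≤ 3 * lam ^ α :=
    rpow_half_two_add_sq_le hα0 hα1 (by norm_num) hlam0.le (by nlinarith)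
  have hfactor : |r ^ 2 - lam ^ 2|⁻¹ ≤ |r - lam|⁻¹ * lam⁻¹ := by
    rw [show r ^ 2 - lam ^ 2 = (r - lam) * (r + lam) by ring, abs_mul,
      abs_of_pos (by linarith : 0 < r + lam), mul_inv]
    gcongr
    linarith
  calc offbandIntegrand α lam r ≤ 3 * lam ^ α * (|r - lam|⁻¹ * lam⁻¹) := by
        unfold offbandIntegrand; gcongr
    _ = 3 * lam ^ (α - 1) * |r - lam|⁻¹ := by
        rw [rpow_sub_one hlam0.ne']; ring

lemma le_far (hα0 : 0 ≤ α) (hα1 : α ≤ 1) (hlam : 1 ≤ lam) {r : ℝ} (hr : 2 * lam ≤ r) :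
    offbandIntegrand α lam r ≤ 4 * r ^ (α - 2) := by
  have hr0 : 0 < r := by linarith
  have hweight : (2 + r ^ 2) ^ (α / 2) ≤ 2 * r ^ α :=
    rpow_half_two_add_sq_le hα0 hα1 one_le_two hr0.le (by nlinarith)
  have hden : (r ^ 2 / 2)⁻¹ ≥ |r ^ 2 - lam ^ 2|⁻¹ := by
    rw [abs_of_nonneg (by nlinarith)]
    gcongr
    nlinarith
  calc offbandIntegrand α lam r ≤ 2 * r ^ α * (r ^ 2 / 2)⁻¹ := by
        unfold offbandIntegrand; gcongr
    _ = 4 * r ^ (α - 2) := by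
        rw [rpow_sub hr0, rpow_two]; field_simp; ring

lemma integrableOn_near (hα0 : 0 ≤ α) (hα1 : α ≤ 1) (hlam : 1 ≤ lam) :
    IntegrableOn (offbandIntegrand α lam) (offbandNear lam) :=
  integrableOn_of_le (measurableSet_offbandNear lam)
    ((integrableOn_inv_abs_sub_offbandNear lam).const_mul _) fun _ hr =>
      le_near hα0 hα1 hlam (mem_Icc_of_mem_offbandNear hr).1 (mem_Icc_of_mem_offbandNear hr).2

lemma setIntegral_near_le (hα0 : 0 ≤ α) (hα1 : α ≤ 1) (hlam : 1 ≤ lam) :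
    ∫ r in offbandNear lam, offbandIntegrand α lam r ≤ 6 * lam ^ (α - 1) * log lam := by
  calc _ ≤ ∫ r in offbandNear lam, 3 * lam ^ (α - 1) * |r - lam|⁻¹ :=
        setIntegral_mono_on (integrableOn_near hα0 hα1 hlam)
          ((integrableOn_inv_abs_sub_offbandNear lam).const_mul _)
          (measurableSet_offbandNear lam) fun _ hr => le_near hα0 hα1 hlam
            (mem_Icc_of_mem_offbandNear hr).1 (mem_Icc_of_mem_offbandNear hr).2
    _ = 6 * lam ^ (α - 1) * log lam := by
        rw [integral_const_mul, integral_inv_abs_sub_offbandNear hlam]; ring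

lemma integrableOn_far (hα0 : 0 ≤ α) (hα1 : α < 1) (hlam : 1 ≤ lam) :
    IntegrableOn (offbandIntegrand α lam) (Ioi (2 * lam)) :=
  integrableOn_of_le measurableSet_Ioi
    ((integrableOn_Ioi_rpow_of_lt (by linarith) (by linarith)).const_mul 4)
    fun _ hr => le_far hα0 hα1.le hlam (le_of_lt hr)

lemma setIntegral_far_le (hα0 : 0 ≤ α) (hα1 : α < 1) (hlam : 1 ≤ lam) :
    ∫ r in Ioi (2 * lam), offbandIntegrand α lam r ≤ 4 / (1 - α) * lam ^ (α - 1) := by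
  have hlam0 : 0 < lam := by linarith
  calc _ ≤ ∫ r in Ioi (2 * lam), 4 * r ^ (α - 2) :=
        setIntegral_mono_on (integrableOn_far hα0 hα1 hlam)
          ((integrableOn_Ioi_rpow_of_lt (by linarith) (by linarith)).const_mul 4)
          measurableSet_Ioi fun _ hr => le_far hα0 hα1.le hlam (le_of_lt hr)
    _ = 4 / (1 - α) * (2 * lam) ^ (α - 1) := by
        rw [integral_const_mul, integral_Ioi_rpow_of_lt (by linarith) (by linarith),
          show α - 2 + 1 = α - 1 by ring, neg_div, ← div_neg, neg_sub]
        ring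
    _ ≤ 4 / (1 - α) * lam ^ (α - 1) := by
        have : 0 < 1 - α := by linarith
        exact mul_le_mul_of_nonneg_left
          (rpow_le_rpow_of_nonpos hlam0 (by linarith) (by linarith)) (by positivity)

end offbandIntegrand

theorem offband_frequency_integral_bound
    (α : ℝ) (hα : α ∈ Set.Ioo (0 : ℝ) 1) :
    ∃ C > 0, ∀ lam : ℝ, 2 ≤ lam →
      (∫ r in {r : ℝ | 0 ≤ r ∧ 1 ≤ |r - lam|},
          (2 + r ^ 2) ^ (α / 2) * |r ^ 2 - lam ^ 2|⁻¹) ≤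
        C * lam ^ (α - 1) * Real.log lam := by
  obtain ⟨hα0, hα1⟩ := hα
  have h1α : 0 < 1 - α := sub_pos.2 hα1
  refine ⟨6 + 8 / (1 - α), by positivity, fun lam hlam => ?_⟩
  have hlam1 : 1 ≤ lam := by linarith
  have hlog : 1 ≤ 2 * log lam := by
    linarith [log_le_log two_pos hlam, log_two_gt_d9]
  change ∫ r in _, offbandIntegrand α lam r ≤ _
  rw [setOf_nonneg_one_le_abs_sub_eq hlam1,
    setIntegral_union (disjoint_offbandNear_Ioi lam) measurableSet_Ioi
      (offbandIntegrand.integrableOn_near hα0.le hα1.le hlam1)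
      (offbandIntegrand.integrableOn_far hα0.le hα1 hlam1)]
  calc _ ≤ 6 * lam ^ (α - 1) * log lam + 4 / (1 - α) * lam ^ (α - 1) :=
        add_le_add (offbandIntegrand.setIntegral_near_le hα0.le hα1.le hlam1)
          (offbandIntegrand.setIntegral_far_le hα0.le hα1 hlam1)
    _ ≤ 6 * lam ^ (α - 1) * log lam + 4 / (1 - α) * lam ^ (α - 1) * (2 * log lam) := by
        have : 0 ≤ 4 / (1 - α) * lam ^ (α - 1) := by positivity
        exact add_le_add_right (le_mul_of_one_le_right this hlog) _
    _ = (6 + 8 / (1 - α)) * lam ^ (α - 1) * log lam := by ring
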